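/- arXiv:2504.11593 — 3 statements merged into one kernel-verified Lean document; each statement's English description precedes it below -/
import Mathlib

section
/- Let $M$ be a probability measure on $[0,1]$ and define $\Psi(t) = \int_{[0,1]} \log(1 - y + y t)\, M(\mathrm{d}y)$ for $t > 0$. If $M(\{0\}) + M(\{1\}) < 1$, then the function $u \mapsto \Psi(e^u)$ is strictly convex on $\mathbb{R}$, with second derivative $\int_{[0,1]} \frac{(1-y) y e^u}{(1 - y + y e^u)^2}\, M(\mathrm{d}y) > 0$. -/
/-!
Each integrand `u ↦ log (1 - y + y eᵘ)` has first derivative `g_y(u) = y eᵘ / (1 - y + y eᵘ)`, a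
logistic function with values in `[0, 1]`, and second derivative `g_y (1 - g_y)`, which lies in
`[0, 1/4]` and is positive exactly for `y ∈ (0, 1)`. These uniform bounds allow differentiating
twice under the integral sign. The second derivative is then positive because `M` charges the
open interval `(0, 1)`, and a positive second derivative gives strict convexity.
-/

open MeasureTheory Set Real

theorem hasDerivAt_integral_of_forall_hasDerivAt_of_norm_le {α 𝕜 E : Type*} [MeasurableSpace α]
    {μ : Measure α} [IsFiniteMeasure μ] [RCLike 𝕜] [NormedAddCommGroup E] [NormedSpace ℝ E]
    [NormedSpace 𝕜 E]
    {F F' : 𝕜 → α → E} {C : ℝ} (hF_int : ∀ x, Integrable (F x) μ)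
    (hF'_meas : ∀ x, AEStronglyMeasurable (F' x) μ) (h_bound : ∀ᵐ a ∂μ, ∀ x, ‖F' x a‖ ≤ C)
    (h_diff : ∀ᵐ a ∂μ, ∀ x, HasDerivAt (F · a) (F' x a) x) (x₀ : 𝕜) :
    HasDerivAt (fun x ↦ ∫ a, F x a ∂μ) (∫ a, F' x₀ a ∂μ) x₀ :=
  (hasDerivAt_integral_of_dominated_loc_of_deriv_le (bound := fun _ ↦ C) Filter.univ_mem
    (.of_forall fun x ↦ (hF_int x).aestronglyMeasurable) (hF_int x₀) (hF'_meas x₀)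
    (h_bound.mono fun _ h x _ ↦ h x) (integrable_const C)
    (h_diff.mono fun _ h x _ ↦ h x)).2

theorem measure_Ioo_pos_of_add_measure_singleton_lt {α : Type*} [PartialOrder α]
    [MeasurableSpace α] {M : Measure α} {a b : α} (h : M {a} + M {b} < M (Icc a b)) :
    0 < M (Ioo a b) := by
  rw [← Icc_sdiff_both]
  calc 0 < M (Icc a b) - (M {a} + M {b}) := tsub_pos_of_lt h
    _ ≤ M (Icc a b) - M {a, b} := tsub_le_tsub_left (measure_union_le _ _) _
    _ ≤ M (Icc a b \ {a, b}) := le_measure_sdiff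

theorem setIntegral_pos_of_pos_on {α : Type*} [MeasurableSpace α] {μ : Measure α}
    {f : α → ℝ} {s t : Set α} (hs : MeasurableSet s) (hf : IntegrableOn f s μ)
    (hf_nonneg : ∀ x ∈ s, 0 ≤ f x) (hts : t ⊆ s) (hf_pos : ∀ x ∈ t, 0 < f x) (ht : 0 < μ t) :
    0 < ∫ x in s, f x ∂μ := by
  rw [setIntegral_pos_iff_support_of_nonneg_ae ((ae_restrict_mem hs).mono hf_nonneg) hf]
  exact ht.trans_le (measure_mono fun x hx ↦ ⟨(hf_pos x hx).ne', hts hx⟩)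

section Integrand

variable {y : ℝ}

theorem one_sub_add_mul_exp_pos (hy : y ∈ Icc 0 1) (u : ℝ) : 0 < 1 - y + y * exp u := by
  rcases hy.2.lt_or_eq with h | rfl
  · nlinarith [mul_nonneg hy.1 (exp_pos u).le]
  · simpa using exp_pos u

theorem hasDerivAt_log_one_sub_add_mul_exp (hy : y ∈ Icc 0 1) (u : ℝ) :
    HasDerivAt (fun u ↦ log (1 - y + y * exp u)) (y * exp u / (1 - y + y * exp u)) u :=
  (((hasDerivAt_exp u).const_mul y).const_add (1 - y)).log (one_sub_add_mul_exp_pos hy u).ne'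

theorem hasDerivAt_mul_exp_div_one_sub_add_mul_exp (hy : y ∈ Icc 0 1) (u : ℝ) :
    HasDerivAt (fun u ↦ y * exp u / (1 - y + y * exp u))
      ((1 - y) * y * exp u / (1 - y + y * exp u) ^ 2) u :=
  (((hasDerivAt_exp u).const_mul y).div (((hasDerivAt_exp u).const_mul y).const_add (1 - y))
    (one_sub_add_mul_exp_pos hy u).ne').congr_deriv (by ring)

theorem norm_mul_exp_div_one_sub_add_mul_exp_le_one (hy : y ∈ Icc 0 1) (u : ℝ) :
    ‖y * exp u / (1 - y + y * exp u)‖ ≤ 1 := by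
  have hden := one_sub_add_mul_exp_pos hy u
  rw [norm_of_nonneg (by have := hy.1; positivity), div_le_one hden]
  linarith [hy.2]

theorem norm_one_sub_mul_mul_exp_div_sq_le_one (hy : y ∈ Icc 0 1) (u : ℝ) :
    ‖(1 - y) * y * exp u / (1 - y + y * exp u) ^ 2‖ ≤ 1 := by
  have hden := one_sub_add_mul_exp_pos hy u
  have ha : 0 ≤ 1 - y := sub_nonneg.2 hy.2
  have hb : 0 ≤ y * exp u := mul_nonneg hy.1 (exp_pos u).le
  rw [norm_of_nonneg (by rw [mul_assoc]; positivity), div_le_one (by positivity)]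
  nlinarith [mul_nonneg ha hb, sq_nonneg (1 - y - y * exp u)]

theorem one_sub_mul_mul_exp_div_sq_nonneg (hy : y ∈ Icc 0 1) (u : ℝ) :
    0 ≤ (1 - y) * y * exp u / (1 - y + y * exp u) ^ 2 := by
  have := sub_nonneg.2 hy.2
  have := hy.1
  positivity

theorem one_sub_mul_mul_exp_div_sq_pos (hy : y ∈ Ioo 0 1) (u : ℝ) :
    0 < (1 - y) * y * exp u / (1 - y + y * exp u) ^ 2 := by
  have := sub_pos.2 hy.2
  have := hy.1
  positivity

end Integrand

section SetIntegral

variable (M : Measure ℝ) [IsFiniteMeasure M]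

theorem hasDerivAt_setIntegral_log_one_sub_add_mul_exp (u : ℝ) :
    HasDerivAt (fun u ↦ ∫ y in Icc 0 1, log (1 - y + y * exp u) ∂M)
      (∫ y in Icc 0 1, y * exp u / (1 - y + y * exp u) ∂M) u :=
  hasDerivAt_integral_of_forall_hasDerivAt_of_norm_le
    (fun u ↦ (ContinuousOn.log (by fun_prop) fun y hy ↦ (one_sub_add_mul_exp_pos hy u).ne')
      |>.integrableOn_compact isCompact_Icc)
    (fun _ ↦ (by fun_prop : Measurable _).aestronglyMeasurable)
    ((ae_restrict_mem measurableSet_Icc).mono fun _ hy ↦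
      norm_mul_exp_div_one_sub_add_mul_exp_le_one hy)
    ((ae_restrict_mem measurableSet_Icc).mono fun _ hy ↦ hasDerivAt_log_one_sub_add_mul_exp hy)
    u

theorem integrableOn_one_sub_mul_mul_exp_div_sq (u : ℝ) :
    IntegrableOn (fun y ↦ (1 - y) * y * exp u / (1 - y + y * exp u) ^ 2) (Icc 0 1) M :=
  Integrable.of_bound (by fun_prop : Measurable _).aestronglyMeasurable 1
    ((ae_restrict_mem measurableSet_Icc).mono fun _ hy ↦
      norm_one_sub_mul_mul_exp_div_sq_le_one hy u)

theorem hasDerivAt_setIntegral_mul_exp_div_one_sub_add_mul_exp (u : ℝ) :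
    HasDerivAt (fun u ↦ ∫ y in Icc 0 1, y * exp u / (1 - y + y * exp u) ∂M)
      (∫ y in Icc 0 1, (1 - y) * y * exp u / (1 - y + y * exp u) ^ 2 ∂M) u :=
  hasDerivAt_integral_of_forall_hasDerivAt_of_norm_le
    (fun u ↦ (ContinuousOn.div (by fun_prop) (by fun_prop) fun y hy ↦
      (one_sub_add_mul_exp_pos hy u).ne').integrableOn_compact isCompact_Icc)
    (fun u ↦ (integrableOn_one_sub_mul_mul_exp_div_sq M u).aestronglyMeasurable)
    ((ae_restrict_mem measurableSet_Icc).mono fun _ hy ↦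
      norm_one_sub_mul_mul_exp_div_sq_le_one hy)
    ((ae_restrict_mem measurableSet_Icc).mono fun _ hy ↦
      hasDerivAt_mul_exp_div_one_sub_add_mul_exp hy)
    u

theorem setIntegral_one_sub_mul_mul_exp_div_sq_pos (hM : 0 < M (Ioo 0 1)) (u : ℝ) :
    0 < ∫ y in Icc 0 1, (1 - y) * y * exp u / (1 - y + y * exp u) ^ 2 ∂M :=
  setIntegral_pos_of_pos_on measurableSet_Icc (integrableOn_one_sub_mul_mul_exp_div_sq M u)
    (fun _ hy ↦ one_sub_mul_mul_exp_div_sq_nonneg hy u) Ioo_subset_Icc_self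
    (fun _ hy ↦ one_sub_mul_mul_exp_div_sq_pos hy u) hM

end SetIntegral

/-- For a probability measure `M` on `[0,1]` with `M({0}) + M({1}) < 1`, the
function `u ↦ Ψ(e^u)` is strictly convex with the stated positive second
derivative, where `Ψ(t) = ∫ log(1 - y + y t) dM(y)`. -/
theorem stmt_3 (M : Measure ℝ) [IsProbabilityMeasure M]
    (hM : M (Set.Icc 0 1) = 1) (hatom : M {0} + M {1} < 1) :
    StrictConvexOn ℝ Set.univ
      (fun u : ℝ => ∫ y in Set.Icc (0:ℝ) 1, Real.log (1 - y + y * Real.exp u) ∂M) ∧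
    ∀ u : ℝ,
      deriv (deriv
        (fun u : ℝ => ∫ y in Set.Icc (0:ℝ) 1, Real.log (1 - y + y * Real.exp u) ∂M)) u
        = ∫ y in Set.Icc (0:ℝ) 1,
            ((1 - y) * y * Real.exp u) / (1 - y + y * Real.exp u) ^ 2 ∂M ∧
      0 < ∫ y in Set.Icc (0:ℝ) 1,
            ((1 - y) * y * Real.exp u) / (1 - y + y * Real.exp u) ^ 2 ∂M := by
  have hsecond : ∀ u, deriv (deriv (fun u ↦ ∫ y in Icc 0 1, log (1 - y + y * exp u) ∂M)) u =
      ∫ y in Icc 0 1, (1 - y) * y * exp u / (1 - y + y * exp u) ^ 2 ∂M := fun u ↦ by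
    rw [funext (hasDerivAt_setIntegral_log_one_sub_add_mul_exp M · |>.deriv)]
    exact (hasDerivAt_setIntegral_mul_exp_div_one_sub_add_mul_exp M u).deriv
  have hpos := setIntegral_one_sub_mul_mul_exp_div_sq_pos M
    (measure_Ioo_pos_of_add_measure_singleton_lt (by rwa [hM]))
  have hcont : Continuous fun u ↦ ∫ y in Icc 0 1, log (1 - y + y * exp u) ∂M :=
    continuous_iff_continuousAt.2 fun u ↦
      (hasDerivAt_setIntegral_log_one_sub_add_mul_exp M u).continuousAt
  exact ⟨strictConvexOn_of_deriv2_pos convex_univ hcont.continuousOn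
    fun u _ ↦ (hpos u).trans_eq (hsecond u).symm, fun u ↦ ⟨hsecond u, hpos u⟩⟩
end

section
/- Let $M$ be a probability measure on $[0,1]$ and define $\Phi(t) = t \int_{[0,1]} \frac{y}{1 - y + y t}\, M(\mathrm{d}y)$ for $t > 0$. Then $\lim_{t \to 0+} \Phi(t) = M(\{1\})$ and $\lim_{t \to +\infty} \Phi(t) = M((0,1]) = 1 - M(\{0\})$. Moreover, if $M(\{0\}) + M(\{1\}) < 1$, then $\Phi$ is a strictly increasing continuous bijection from $(0,\infty)$ onto $(M(\{1\}), 1 - M(\{0\}))$. -/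
open MeasureTheory Filter Set Topology

/-!
Write `Φ(t) = ∫_{[0,1]} g_t(y) dM(y)` with `g_t(y) = t y / (1 - y + y t)`: for `y ∈ [0,1]`,
`g_t(y)` is the probability whose odds are `t` times the odds `y / (1 - y)` of `y`. Hence
`0 ≤ g_t ≤ 1`, `g_t(y)` increases with `t` (strictly when `0 < y < 1`), and as `t → 0+` resp.
`t → ∞` it tends to the indicator of `{1}` resp. of `(0,1]`. Dominated convergence with the
constant bound `1` gives both limits and the continuity of `Φ`; if `M` charges `(0,1)`, `Φ` is
strictly increasing, and a strictly increasing continuous function on `(0,∞)` is a bijection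
onto the open interval between its limits.
-/

noncomputable def oddsScale (t y : ℝ) : ℝ := t * (y / (1 - y + y * t))

section oddsScale

variable {t t₁ t₂ y : ℝ}

lemma one_sub_add_mul_pos (hy : y ∈ Icc (0 : ℝ) 1) (ht : 0 < t) : 0 < 1 - y + y * t := by
  nlinarith [hy.1, hy.2, mul_nonneg hy.1 ht.le]

@[fun_prop]
lemma measurable_oddsScale (t : ℝ) : Measurable (oddsScale t) := by
  unfold oddsScale; fun_prop

lemma oddsScale_nonneg (hy : y ∈ Icc (0 : ℝ) 1) (ht : 0 < t) : 0 ≤ oddsScale t y :=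
  mul_nonneg ht.le (div_nonneg hy.1 (one_sub_add_mul_pos hy ht).le)

lemma oddsScale_le_one (hy : y ∈ Icc (0 : ℝ) 1) (ht : 0 < t) : oddsScale t y ≤ 1 := by
  rw [oddsScale, ← mul_div_assoc, div_le_one (one_sub_add_mul_pos hy ht)]
  nlinarith [hy.2]

lemma norm_oddsScale_le_one (hy : y ∈ Icc (0 : ℝ) 1) (ht : 0 < t) : ‖oddsScale t y‖ ≤ 1 := by
  rw [Real.norm_of_nonneg (oddsScale_nonneg hy ht)]
  exact oddsScale_le_one hy ht

lemma oddsScale_zero_right (t : ℝ) : oddsScale t 0 = 0 := by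
  simp [oddsScale]

lemma oddsScale_one_right (ht : t ≠ 0) : oddsScale t 1 = 1 := by
  simp [oddsScale, ht]

lemma oddsScale_le_oddsScale (hy : y ∈ Icc (0 : ℝ) 1) (ht₁ : 0 < t₁) (h : t₁ ≤ t₂) :
    oddsScale t₁ y ≤ oddsScale t₂ y := by
  have d₁ := one_sub_add_mul_pos hy ht₁
  have d₂ := one_sub_add_mul_pos hy (ht₁.trans_le h)
  rw [oddsScale, oddsScale, ← mul_div_assoc, ← mul_div_assoc, div_le_div_iff₀ d₁ d₂]
  nlinarith [mul_nonneg (mul_nonneg hy.1 (sub_nonneg.2 hy.2)) (sub_nonneg.2 h)]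

lemma oddsScale_lt_oddsScale (hy : y ∈ Ioo (0 : ℝ) 1) (ht₁ : 0 < t₁) (h : t₁ < t₂) :
    oddsScale t₁ y < oddsScale t₂ y := by
  have d₁ := one_sub_add_mul_pos (Ioo_subset_Icc_self hy) ht₁
  have d₂ := one_sub_add_mul_pos (Ioo_subset_Icc_self hy) (ht₁.trans h)
  rw [oddsScale, oddsScale, ← mul_div_assoc, ← mul_div_assoc, div_lt_div_iff₀ d₁ d₂]
  nlinarith [mul_pos (mul_pos hy.1 (sub_pos.2 hy.2)) (sub_pos.2 h)]

lemma continuousAt_oddsScale (h : 1 - y + y * t ≠ 0) :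
    ContinuousAt (fun s => oddsScale s y) t := by
  unfold oddsScale
  exact continuousAt_id.mul (continuousAt_const.div (by fun_prop) h)

lemma tendsto_oddsScale_nhdsGT_zero (hy : y ∈ Icc (0 : ℝ) 1) :
    Tendsto (fun t => oddsScale t y) (𝓝[>] 0) (𝓝 (indicator {1} 1 y)) := by
  rcases hy.2.eq_or_lt with rfl | hy1
  · rw [indicator_of_mem (mem_singleton 1), Pi.one_apply]
    refine tendsto_const_nhds.congr' ?_
    filter_upwards [self_mem_nhdsWithin] with t ht using (oddsScale_one_right (ne_of_gt ht)).symm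
  · have hne : 1 - y + y * 0 ≠ 0 := by linarith
    have := (continuousAt_oddsScale hne).tendsto.mono_left (nhdsWithin_le_nhds (s := Ioi 0))
    rw [indicator_of_notMem (show y ∉ ({1} : Set ℝ) from hy1.ne)]
    simpa [oddsScale] using this

lemma tendsto_oddsScale_atTop (hy : y ∈ Icc (0 : ℝ) 1) :
    Tendsto (fun t => oddsScale t y) atTop (𝓝 (indicator (Ioc 0 1) 1 y)) := by
  rcases hy.1.eq_or_lt with rfl | hy0
  · simp [oddsScale_zero_right]
  · rw [indicator_of_mem (show y ∈ Ioc 0 1 from ⟨hy0, hy.2⟩), Pi.one_apply]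
    have hlim : Tendsto (fun t => y / ((1 - y) / t + y)) atTop (𝓝 (y / (0 + y))) :=
      tendsto_const_nhds.div ((tendsto_const_nhds.div_atTop tendsto_id).add tendsto_const_nhds)
        (by simpa using hy0.ne')
    rw [zero_add, div_self hy0.ne'] at hlim
    refine hlim.congr' ?_
    filter_upwards [eventually_gt_atTop 0] with t ht
    have := one_sub_add_mul_pos hy ht
    rw [oddsScale]
    field_simp

end oddsScale

lemma integral_lt_integral_of_ae_le_of_measure_setOf_lt_ne_zero {α : Type*}
    [MeasurableSpace α] {μ : Measure α} {f g : α → ℝ} (hf : Integrable f μ) (hg : Integrable g μ)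
    (hle : f ≤ᵐ[μ] g) (hlt : μ {x | f x < g x} ≠ 0) :
    ∫ x, f x ∂μ < ∫ x, g x ∂μ := by
  rw [← sub_pos, ← integral_sub hg hf, integral_pos_iff_support_of_nonneg_ae
    (hle.mono fun x => sub_nonneg.2) (hg.sub hf)]
  refine pos_iff_ne_zero.2 (mt (measure_mono_null ?_) hlt)
  exact fun x hx => (sub_pos.2 hx).ne'

lemma StrictMonoOn.bijOn_Ioo_of_tendsto {f : ℝ → ℝ} {c a b : ℝ} (hmono : StrictMonoOn f (Ioi c))
    (hcont : ContinuousOn f (Ioi c)) (hc : Tendsto f (𝓝[>] c) (𝓝 a))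
    (htop : Tendsto f atTop (𝓝 b)) :
    BijOn f (Ioi c) (Ioo a b) := by
  refine ⟨fun t (ht : c < t) => ⟨?_, ?_⟩, hmono.injOn, fun v hv => ?_⟩
  · obtain ⟨s, hcs, hst⟩ := exists_between ht
    refine (le_of_tendsto hc ?_).trans_lt (hmono hcs ht hst)
    filter_upwards [Ioo_mem_nhdsGT hcs] with x hx using (hmono hx.1 hcs hx.2).le
  · refine (hmono ht (ht.trans (lt_add_one t)) (lt_add_one t)).trans_le (ge_of_tendsto htop ?_)
    filter_upwards [eventually_ge_atTop (t + 1)] with x hx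
    exact hmono.monotoneOn (ht.trans (lt_add_one t)) (ht.trans_le (by linarith)) hx
  obtain ⟨t₁, hvt₁, ht₁⟩ := ((hc.eventually_lt_const hv.1).and self_mem_nhdsWithin).exists
  obtain ⟨t₂, hvt₂, ht₁₂⟩ := ((htop.eventually_const_lt hv.2).and (eventually_gt_atTop t₁)).exists
  obtain ⟨t, ht, rfl⟩ := intermediate_value_Ioo ht₁₂.le
    (hcont.mono fun x hx => lt_of_lt_of_le ht₁ hx.1) ⟨hvt₁, hvt₂⟩
  exact ⟨t, lt_trans ht₁ ht.1, rfl⟩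

lemma setIntegral_Icc_indicator_one (M : Measure ℝ) {s : Set ℝ} (hs : MeasurableSet s)
    (hsub : s ⊆ Icc 0 1) :
    ∫ y in Icc 0 1, s.indicator 1 y ∂M = M.real s := by
  rw [integral_indicator_one hs, measureReal_restrict_apply hs, inter_eq_left.2 hsub]

section oddsMean

variable (M : Measure ℝ) [IsFiniteMeasure M]

noncomputable def oddsMean (t : ℝ) : ℝ := ∫ y in Icc 0 1, oddsScale t y ∂M

lemma integrableOn_oddsScale {t : ℝ} (ht : 0 < t) : IntegrableOn (oddsScale t) (Icc 0 1) M :=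
  (integrable_const (1 : ℝ)).mono' (measurable_oddsScale t).aestronglyMeasurable <| by
    filter_upwards [ae_restrict_mem measurableSet_Icc] with y hy using norm_oddsScale_le_one hy ht

lemma tendsto_oddsMean {l : Filter ℝ} [l.IsCountablyGenerated] (hl : ∀ᶠ t in l, 0 < t)
    {g : ℝ → ℝ} (hg : ∀ y ∈ Icc (0 : ℝ) 1, Tendsto (fun t => oddsScale t y) l (𝓝 (g y))) :
    Tendsto (oddsMean M) l (𝓝 (∫ y in Icc 0 1, g y ∂M)) := by
  refine tendsto_integral_filter_of_dominated_convergence (fun _ => 1)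
    (.of_forall fun t => (measurable_oddsScale t).aestronglyMeasurable) ?_
    (integrable_const 1) ?_
  · filter_upwards [hl] with t ht
    filter_upwards [ae_restrict_mem measurableSet_Icc] with y hy using norm_oddsScale_le_one hy ht
  · filter_upwards [ae_restrict_mem measurableSet_Icc] with y hy using hg y hy

lemma tendsto_oddsMean_nhdsGT_zero : Tendsto (oddsMean M) (𝓝[>] 0) (𝓝 (M.real {1})) := by
  rw [← setIntegral_Icc_indicator_one M (measurableSet_singleton 1) (by simp)]
  exact tendsto_oddsMean M self_mem_nhdsWithin fun y hy => tendsto_oddsScale_nhdsGT_zero hy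

lemma tendsto_oddsMean_atTop : Tendsto (oddsMean M) atTop (𝓝 (M.real (Ioc 0 1))) := by
  rw [← setIntegral_Icc_indicator_one M measurableSet_Ioc Ioc_subset_Icc_self]
  exact tendsto_oddsMean M (eventually_gt_atTop 0) fun y hy => tendsto_oddsScale_atTop hy

lemma continuousOn_oddsMean : ContinuousOn (oddsMean M) (Ioi 0) := fun t (ht : 0 < t) =>
  ContinuousAt.continuousWithinAt <| tendsto_oddsMean M (Ioi_mem_nhds ht) fun _ hy =>
    continuousAt_oddsScale (one_sub_add_mul_pos hy ht).ne'

lemma strictMonoOn_oddsMean (hM : M (Ioo 0 1) ≠ 0) : StrictMonoOn (oddsMean M) (Ioi 0) := by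
  intro t₁ (ht₁ : 0 < t₁) t₂ (ht₂ : 0 < t₂) h
  refine integral_lt_integral_of_ae_le_of_measure_setOf_lt_ne_zero
    (integrableOn_oddsScale M ht₁) (integrableOn_oddsScale M ht₂) ?_ ?_
  · filter_upwards [ae_restrict_mem measurableSet_Icc] with y hy
    exact oddsScale_le_oddsScale hy ht₁ h.le
  · refine ne_bot_of_le_ne_bot hM <|
      (measure_mono fun y hy => ?_).trans (Measure.le_restrict_apply _ _)
    exact ⟨oddsScale_lt_oddsScale hy ht₁ h, Ioo_subset_Icc_self hy⟩

end oddsMean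

lemma measureReal_Ioc_zero_one (M : Measure ℝ) [IsFiniteMeasure M] (hM : M (Icc 0 1) = 1) :
    M.real (Ioc 0 1) = 1 - M.real {0} := by
  have hunion : M.real (Icc 0 1) = M.real {0} + M.real (Ioc 0 1) := by
    rw [← Ioc_insert_left zero_le_one, insert_eq,
      measureReal_union (by simp) measurableSet_Ioc]
  rw [measureReal_def, hM, ENNReal.toReal_one] at hunion
  linarith

lemma measure_Ioo_zero_one_ne_zero (M : Measure ℝ) (hM : M (Icc 0 1) = 1)
    (hlt : M {0} + M {1} < 1) : M (Ioo 0 1) ≠ 0 := by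
  intro hIoo
  have : M {0, 1} = 1 := by
    rw [← Icc_sdiff_Ioo_same zero_le_one, measure_sdiff_null hIoo, hM]
  exact hlt.not_ge (this ▸ measure_union_le {0} {1})

/-- Properties of `Φ(t) = t ∫ y/(1-y+yt) dM(y)` for a probability measure `M`
on `[0,1]`: limits at `0+` and `+∞`, and, when `M({0}) + M({1}) < 1`, strict
monotonicity, continuity, and bijectivity onto `(M({1}), 1 - M({0}))`. -/
theorem stmt_4 (M : Measure ℝ) [IsProbabilityMeasure M]
    (hM : M (Set.Icc 0 1) = 1) :
    Filter.Tendsto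
      (fun t : ℝ => t * ∫ y in Set.Icc (0:ℝ) 1, y / (1 - y + y * t) ∂M)
      (nhdsWithin 0 (Set.Ioi 0)) (nhds (M {1}).toReal) ∧
    Filter.Tendsto
      (fun t : ℝ => t * ∫ y in Set.Icc (0:ℝ) 1, y / (1 - y + y * t) ∂M)
      Filter.atTop (nhds (1 - (M {0}).toReal)) ∧
    (M (Set.Ioc 0 1)).toReal = 1 - (M {0}).toReal ∧
    (M {0} + M {1} < 1 →
      StrictMonoOn
        (fun t : ℝ => t * ∫ y in Set.Icc (0:ℝ) 1, y / (1 - y + y * t) ∂M)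
        (Set.Ioi 0) ∧
      ContinuousOn
        (fun t : ℝ => t * ∫ y in Set.Icc (0:ℝ) 1, y / (1 - y + y * t) ∂M)
        (Set.Ioi 0) ∧
      Set.BijOn
        (fun t : ℝ => t * ∫ y in Set.Icc (0:ℝ) 1, y / (1 - y + y * t) ∂M)
        (Set.Ioi 0) (Set.Ioo (M {1}).toReal (1 - (M {0}).toReal))) := by
  have hΦ : (fun t : ℝ => t * ∫ y in Icc (0:ℝ) 1, y / (1 - y + y * t) ∂M) = oddsMean M :=
    funext fun t => (integral_const_mul t _).symm
  have hIoc := measureReal_Ioc_zero_one M hM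
  have h0 := tendsto_oddsMean_nhdsGT_zero M
  have htop : Tendsto (oddsMean M) atTop (𝓝 (1 - M.real {0})) :=
    hIoc ▸ tendsto_oddsMean_atTop M
  rw [hΦ]
  refine ⟨h0, htop, hIoc, fun hlt => ?_⟩
  have hmono := strictMonoOn_oddsMean M (measure_Ioo_zero_one_ne_zero M hM hlt)
  have hcont := continuousOn_oddsMean M
  exact ⟨hmono, hcont, hmono.bijOn_Ioo_of_tendsto hcont h0 htop⟩
end

section
/- Let $P_n^{(1)}, P_n^{(2)}$ be polynomials of degree at most $n$, and define the classical convolution $[P_n^{(1)} * P_n^{(2)}](z) = \int_0^z P_n^{(1)}(u) P_n^{(2)}(z - u)\,\mathrm{d}u$ and the finite free additive convolution $\boxplus_n$ by $\sum_k a_k^{(1)} x^k \boxplus_n \sum_k a_k^{(2)} x^k = \frac{1}{n!}\sum_{k=0}^n \frac{x^k}{k!} \sum_{j_1 + j_2 = n + k} a_{j_1}^{(1)} a_{j_2}^{(2)} j_1! j_2!$. Then $\frac{1}{n!} \left(\frac{\mathrm{d}}{\mathrm{d}z}\right)^{n+1} [P_n^{(1)} * P_n^{(2)}](z) = P_n^{(1)}(z)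 \boxplus_n P_n^{(2)}(z)$. -/
/-! Expanding both factors in monomials reduces the convolution to the integrals
`∫₀^z u^j (z-u)^k du = j! k! / (j+k+1)! z^(j+k+1)` (integration by parts, lowering `k`). Hence the
classical convolution is a polynomial whose coefficient of `z^(s+1)` is `c_s / (s+1)!`, where `c_s`
is the coefficient of `z^s` in `L P * L Q` and `L` multiplies the coefficient of `z^j` by `j!`.
Differentiating `n+1` times turns `z^(n+m+1) / (n+m+1)!` into `z^m / m!`, which gives the
coefficient `c_(n+m) / (n! m!)` of `z^m` in `P ⊞ₙ Q`; the coefficients with `m > n` vanish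
because `L P * L Q` has degree at most `2n`. -/

open Polynomial

/-- The finite free additive convolution of two polynomials of degree at most
`n`. -/
noncomputable def ffAdd (n : ℕ) (P Q : Polynomial ℝ) : Polynomial ℝ :=
  ∑ k ∈ Finset.range (n + 1),
    C ((1 / (n.factorial : ℝ)) * (1 / (k.factorial : ℝ)) *
        ∑ j ∈ Finset.range (n + k + 1),
          P.coeff j * Q.coeff (n + k - j) *
            (j.factorial : ℝ) * ((n + k - j).factorial : ℝ)) * X ^ k

open Finset
open scoped Nat

theorem integral_pow_mul_sub_pow_succ (j k : ℕ) (z : ℝ) :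
    (j + 1) * ∫ u in (0:ℝ)..z, u ^ j * (z - u) ^ (k + 1)
      = (k + 1) * ∫ u in (0:ℝ)..z, u ^ (j + 1) * (z - u) ^ k := by
  have hu (x : ℝ) : HasDerivAt (fun u : ℝ => u ^ (j + 1)) ((j + 1) * x ^ j) x := by
    simpa using hasDerivAt_pow (j + 1) x
  have hv (x : ℝ) :
      HasDerivAt (fun u : ℝ => (z - u) ^ (k + 1)) (-((k + 1) * (z - x) ^ k)) x := by
    simpa [mul_comm] using ((hasDerivAt_id x).const_sub z).fun_pow (k + 1)
  have hparts := intervalIntegral.integral_deriv_mul_eq_sub (a := 0) (b := z)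
    (fun x _ => hu x) (fun x _ => hv x)
    (by apply Continuous.intervalIntegrable; fun_prop)
    (by apply Continuous.intervalIntegrable; fun_prop)
  simp only [sub_self, zero_pow (Nat.succ_ne_zero _), mul_zero, zero_mul, sub_zero] at hparts
  rw [← intervalIntegral.integral_const_mul, ← intervalIntegral.integral_const_mul,
    ← sub_eq_zero, ← intervalIntegral.integral_sub, ← hparts]
  · congr 1; ext u; ring
  all_goals apply Continuous.intervalIntegrable; fun_prop

theorem integral_pow_mul_sub_pow (j k : ℕ) (z : ℝ) :
    ∫ u in (0:ℝ)..z, u ^ j * (z - u) ^ k = j ! * k ! / (j + k + 1)! * z ^ (j + k + 1) := by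
  induction k generalizing j with
  | zero =>
    rw [Nat.add_zero, Nat.factorial_zero, Nat.factorial_succ]
    simp only [pow_zero, mul_one, integral_pow]
    push_cast
    field_simp
    ring
  | succ k ih =>
    have hrec := integral_pow_mul_sub_pow_succ j k z
    rw [ih, show j + 1 + k + 1 = j + (k + 1) + 1 by omega] at hrec
    have hj : (j + 1 : ℝ) ≠ 0 := by positivity
    rw [← mul_right_inj' hj, hrec, Nat.factorial_succ j, Nat.factorial_succ k]
    push_cast
    field_simp

/-- The formal Laplace transform `z^j ↦ j! / s^(j+1)`, written in the variable `1/s` and without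
the factor `1/s`; it turns convolution into multiplication (`coeff_convPoly_succ`). -/
noncomputable def laplacePoly {R : Type*} [Semiring R] (P : R[X]) : R[X] :=
  ∑ j ∈ range (P.natDegree + 1), C (P.coeff j * j !) * X ^ j

theorem coeff_laplacePoly {R : Type*} [Semiring R] (P : R[X]) (j : ℕ) :
    (laplacePoly P).coeff j = P.coeff j * j ! := by
  rw [laplacePoly, finsetSum_coeff]
  simp only [coeff_C_mul_X_pow, sum_ite_eq, mem_range]
  split_ifs with hj
  · rfl
  · rw [coeff_eq_zero_of_natDegree_lt (by omega), zero_mul]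

theorem natDegree_laplacePoly_le {R : Type*} [Semiring R] (P : R[X]) :
    (laplacePoly P).natDegree ≤ P.natDegree :=
  natDegree_le_iff_coeff_eq_zero.2 fun j hj => by
    rw [coeff_laplacePoly, coeff_eq_zero_of_natDegree_lt (by exact_mod_cast hj), zero_mul]

noncomputable def convPoly {K : Type*} [Field K] (P Q : K[X]) : K[X] :=
  ∑ j ∈ range (P.natDegree + 1), ∑ k ∈ range (Q.natDegree + 1),
    C (P.coeff j * j ! * (Q.coeff k * k !) / (j + k + 1)!) * X ^ (j + k + 1)

theorem intervalIntegral_eval_mul_eval_sub (P Q : ℝ[X]) (z : ℝ) :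
    ∫ u in (0:ℝ)..z, P.eval u * Q.eval (z - u) = (convPoly P Q).eval z := by
  simp only [eval_eq_sum_range (p := P), eval_eq_sum_range (p := Q), sum_mul_sum, convPoly,
    eval_finsetSum, eval_mul, eval_C, eval_pow, eval_X]
  rw [intervalIntegral.integral_finsetSum fun j _ =>
    (by fun_prop : Continuous _).intervalIntegrable _ _]
  refine sum_congr rfl fun j _ => ?_
  rw [intervalIntegral.integral_finsetSum fun k _ =>
    (by fun_prop : Continuous _).intervalIntegrable _ _]
  refine sum_congr rfl fun k _ => ?_
  rw [show (fun u => P.coeff j * u ^ j * (Q.coeff k * (z - u) ^ k))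
      = fun u => P.coeff j * Q.coeff k * (u ^ j * (z - u) ^ k) by ext u; ring,
    intervalIntegral.integral_const_mul, integral_pow_mul_sub_pow]
  ring

theorem laplacePoly_mul_laplacePoly {R : Type*} [CommSemiring R] (P Q : R[X]) :
    laplacePoly P * laplacePoly Q =
      ∑ j ∈ range (P.natDegree + 1), ∑ k ∈ range (Q.natDegree + 1),
        C (P.coeff j * j ! * (Q.coeff k * k !)) * X ^ (j + k) := by
  simp only [laplacePoly, sum_mul_sum, C_mul, pow_add]
  refine sum_congr rfl fun j _ => sum_congr rfl fun k _ => ?_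
  ring

theorem coeff_convPoly_succ {K : Type*} [Field K] (P Q : K[X]) (s : ℕ) :
    (convPoly P Q).coeff (s + 1) = (laplacePoly P * laplacePoly Q).coeff s / (s + 1)! := by
  simp only [convPoly, laplacePoly_mul_laplacePoly, finsetSum_coeff, sum_div, coeff_C_mul_X_pow]
  refine sum_congr rfl fun j _ => sum_congr rfl fun k _ => ?_
  by_cases h : s = j + k <;> simp [h]

theorem coeff_ffAdd (n m : ℕ) (P Q : ℝ[X]) :
    (ffAdd n P Q).coeff m
      = if m ≤ n then (laplacePoly P * laplacePoly Q).coeff (n + m) / (n ! * m !) else 0 := by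
  simp only [ffAdd, finsetSum_coeff, coeff_C_mul_X_pow, sum_ite_eq, mem_range, Nat.lt_succ_iff]
  split_ifs
  · rw [coeff_mul, Nat.sum_antidiagonal_eq_sum_range_succ
      (fun j k => (laplacePoly P).coeff j * (laplacePoly Q).coeff k)]
    simp only [coeff_laplacePoly]
    field_simp
    exact sum_congr rfl fun j _ => by ring
  · rfl

theorem iterate_deriv_eval {𝕜 : Type*} [NontriviallyNormedField 𝕜] (p : 𝕜[X]) (m : ℕ) :
    deriv^[m] (fun x => p.eval x) = fun x => (derivative^[m] p).eval x := by
  induction m generalizing p with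
  | zero => rfl
  | succ m ih =>
    rw [Function.iterate_succ_apply, Function.iterate_succ_apply, ← ih]
    congr 1
    ext x
    exact Polynomial.deriv p

theorem C_mul_iterate_derivative_convPoly (n : ℕ) (P Q : ℝ[X])
    (hP : P.natDegree ≤ n) (hQ : Q.natDegree ≤ n) :
    C (1 / (n ! : ℝ)) * derivative^[n + 1] (convPoly P Q) = ffAdd n P Q := by
  ext m
  rw [coeff_C_mul, coeff_iterate_derivative, nsmul_eq_mul, ← add_assoc, coeff_convPoly_succ,
    coeff_ffAdd]
  split_ifs with hm
  · have hfac : ((m + n + 1).descFactorial (n + 1) : ℝ) * m ! = (m + n + 1)! := by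
      rw [add_assoc, Nat.add_descFactorial_eq_ascFactorial, mul_comm]
      exact_mod_cast Nat.factorial_mul_ascFactorial m (n + 1)
    rw [add_comm n m]
    field_simp
    linear_combination (laplacePoly P * laplacePoly Q).coeff (m + n) * hfac
  · have hdeg : (laplacePoly P * laplacePoly Q).natDegree < m + n := calc
      _ ≤ (laplacePoly P).natDegree + (laplacePoly Q).natDegree := natDegree_mul_le
      _ ≤ n + n := Nat.add_le_add ((natDegree_laplacePoly_le P).trans hP)
          ((natDegree_laplacePoly_le Q).trans hQ)
      _ < m + n := by omega
    simp only [coeff_eq_zero_of_natDegree_lt hdeg, zero_div, mul_zero]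

/-- The finite free additive convolution is, up to normalization, the
`(n+1)`-st derivative of the classical convolution. -/
theorem stmt_8 (n : ℕ) (P Q : Polynomial ℝ)
    (hP : P.natDegree ≤ n) (hQ : Q.natDegree ≤ n) (z : ℝ) :
    (1 / (n.factorial : ℝ)) *
        (deriv^[n + 1] (fun z : ℝ => ∫ u in (0:ℝ)..z, P.eval u * Q.eval (z - u))) z
      = (ffAdd n P Q).eval z := by
  rw [funext (intervalIntegral_eval_mul_eval_sub P Q), iterate_deriv_eval, ← eval_C_mul,
    C_mul_iterate_derivative_convPoly n P Q hP hQ]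
end
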